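/- Let (M,g) be a Kähler–Einstein manifold with Einstein constant λ, and let z be holomorphic normal coordinates centered at x ∈ M. Then for every smooth function φ defined near x, the second power of the Kähler Laplacian satisfies Δ²φ(0) = ((Δ_c)² + λ Δ_c) φ(0), where Δ = g^{i j̄} ∂²/∂z_j∂z̄_i and Δ_c = Σ_i ∂²/∂z_i∂z̄_i. -/

import Mathlib

open Complex

/-- Wirtinger derivative ∂/∂z_i for functions on ℂⁿ. -/
noncomputable def dz {n : ℕ} (i : Fin n) (f : (Fin n → ℂ) → ℂ) : (Fin n → ℂ) → ℂ :=
  fun p => (1 / 2) * (fderiv ℝ f p (Pi.single i 1) -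
    Complex.I * fderiv ℝ f p (Pi.single i Complex.I))

/-- Wirtinger derivative ∂/∂z̄_i for functions on ℂⁿ. -/
noncomputable def dzbar {n : ℕ} (i : Fin n) (f : (Fin n → ℂ) → ℂ) : (Fin n → ℂ) → ℂ :=
  fun p => (1 / 2) * (fderiv ℝ f p (Pi.single i 1) +
    Complex.I * fderiv ℝ f p (Pi.single i Complex.I))

/-- Complex Euclidean Laplacian Δ_c = Σ_i ∂²/∂z_i∂z̄_i on ℂⁿ. -/
noncomputable def Deltac {n : ℕ} (f : (Fin n → ℂ) → ℂ) : (Fin n → ℂ) → ℂ :=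
  fun p => ∑ i, dz i (dzbar i f) p

/-- Kähler Laplacian Δ = g^{i j̄} ∂²/∂z_j∂z̄_i in local coordinates. -/
noncomputable def DeltaK {n : ℕ} (ginv : (Fin n → ℂ) → Matrix (Fin n) (Fin n) ℂ)
    (f : (Fin n → ℂ) → ℂ) : (Fin n → ℂ) → ℂ :=
  fun p => ∑ i, ∑ j, ginv p i j * dz j (dzbar i f) p

/-- Coordinate expression of the Ricci tensor of a Kähler metric. -/
noncomputable def Ric {n : ℕ} (g ginv : (Fin n → ℂ) → Matrix (Fin n) (Fin n) ℂ)
    (i j : Fin n) : (Fin n → ℂ) → ℂ :=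
  fun p => ∑ k, ∑ h, ginv p k h *
    (-(dz k (dzbar h (fun q => g q i j)) p) +
      ∑ a, ∑ b, ginv p a b * dz k (fun q => g q i b) p * dzbar h (fun q => g q a j) p)


lemma dz_const {n : ℕ} (i : Fin n) (c : ℂ) (p : Fin n → ℂ) : dz i (fun _ => c) p = 0 := by
  simp [dz]

lemma dzbar_const {n : ℕ} (i : Fin n) (c : ℂ) (p : Fin n → ℂ) : dzbar i (fun _ => c) p = 0 := by
  simp [dzbar]

lemma dz_mul {n : ℕ} (i : Fin n) (f g : (Fin n → ℂ) → ℂ) (p : Fin n → ℂ)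
    (hf : DifferentiableAt ℝ f p) (hg : DifferentiableAt ℝ g p) :
    dz i (fun q => f q * g q) p = dz i f p * g p + f p * dz i g p := by
  simp only [dz, fderiv_fun_mul hf hg, ContinuousLinearMap.add_apply,
    ContinuousLinearMap.smul_apply, smul_eq_mul]
  ring

lemma dzbar_mul {n : ℕ} (i : Fin n) (f g : (Fin n → ℂ) → ℂ) (p : Fin n → ℂ)
    (hf : DifferentiableAt ℝ f p) (hg : DifferentiableAt ℝ g p) :
    dzbar i (fun q => f q * g q) p = dzbar i f p * g p + f p * dzbar i g p := by
  simp only [dzbar, fderiv_fun_mul hf hg, ContinuousLinearMap.add_apply,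
    ContinuousLinearMap.smul_apply, smul_eq_mul]
  ring

lemma dz_add {n : ℕ} (i : Fin n) (f g : (Fin n → ℂ) → ℂ) (p : Fin n → ℂ)
    (hf : DifferentiableAt ℝ f p) (hg : DifferentiableAt ℝ g p) :
    dz i (fun q => f q + g q) p = dz i f p + dz i g p := by
  simp only [dz, fderiv_fun_add hf hg, ContinuousLinearMap.add_apply]
  ring

lemma dz_sum {n : ℕ} {ι : Type*} (s : Finset ι) (i : Fin n) (f : ι → (Fin n → ℂ) → ℂ)
    (p : Fin n → ℂ) (hf : ∀ k ∈ s, DifferentiableAt ℝ (f k) p) :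
    dz i (fun q => ∑ k ∈ s, f k q) p = ∑ k ∈ s, dz i (f k) p := by
  simp only [dz, fderiv_fun_sum hf, ContinuousLinearMap.sum_apply, Finset.mul_sum,
    Finset.sum_sub_distrib]
  rw [← Finset.sum_sub_distrib, Finset.mul_sum]

lemma dzbar_sum {n : ℕ} {ι : Type*} (s : Finset ι) (i : Fin n) (f : ι → (Fin n → ℂ) → ℂ)
    (p : Fin n → ℂ) (hf : ∀ k ∈ s, DifferentiableAt ℝ (f k) p) :
    dzbar i (fun q => ∑ k ∈ s, f k q) p = ∑ k ∈ s, dzbar i (f k) p := by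
  simp only [dzbar, fderiv_fun_sum hf, ContinuousLinearMap.sum_apply, Finset.mul_sum,
    Finset.sum_add_distrib]
  rw [← Finset.sum_add_distrib, Finset.mul_sum]

lemma contDiff_dz {n : ℕ} (i : Fin n) (f : (Fin n → ℂ) → ℂ) (hf : ContDiff ℝ (⊤ : ℕ∞) f) :
    ContDiff ℝ (⊤ : ℕ∞) (dz i f) := by
  have h : ContDiff ℝ (⊤ : ℕ∞) (fderiv ℝ f) := hf.fderiv_right (by simp)
  exact contDiff_const.mul ((h.clm_apply contDiff_const).sub
    (contDiff_const.mul (h.clm_apply contDiff_const)))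

lemma contDiff_dzbar {n : ℕ} (i : Fin n) (f : (Fin n → ℂ) → ℂ) (hf : ContDiff ℝ (⊤ : ℕ∞) f) :
    ContDiff ℝ (⊤ : ℕ∞) (dzbar i f) := by
  have h : ContDiff ℝ (⊤ : ℕ∞) (fderiv ℝ f) := hf.fderiv_right (by simp)
  exact contDiff_const.mul ((h.clm_apply contDiff_const).add
    (contDiff_const.mul (h.clm_apply contDiff_const)))

/-- second mixed derivative of a product -/
lemma dz_dzbar_mul {n : ℕ} (k h : Fin n) (u v : (Fin n → ℂ) → ℂ)
    (hu : ContDiff ℝ (⊤ : ℕ∞) u) (hv : ContDiff ℝ (⊤ : ℕ∞) v) (p : Fin n → ℂ) :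
    dz k (dzbar h (fun q => u q * v q)) p =
      dz k (dzbar h u) p * v p + dzbar h u p * dz k v p +
      dz k u p * dzbar h v p + u p * dz k (dzbar h v) p := by
  have e1 : dzbar h (fun q => u q * v q) = fun q => dzbar h u q * v q + u q * dzbar h v q :=
    funext fun q => dzbar_mul h u v q (hu.differentiable (by simp) q) (hv.differentiable (by simp) q)
  rw [e1]
  have d1 : DifferentiableAt ℝ (fun q => dzbar h u q * v q) p :=
    (((contDiff_dzbar h u hu).differentiable (by simp) p).mul (hv.differentiable (by simp) p))
  have d2 : DifferentiableAt ℝ (fun q => u q * dzbar h v q) p :=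
    ((hu.differentiable (by simp) p).mul ((contDiff_dzbar h v hv).differentiable (by simp) p))
  have e2 : dz k (fun q => (dzbar h u q * v q) + (u q * dzbar h v q)) p
      = dz k (fun q => dzbar h u q * v q) p + dz k (fun q => u q * dzbar h v q) p :=
    dz_add k _ _ p d1 d2
  rw [e2,
    dz_mul k (dzbar h u) v p ((contDiff_dzbar h u hu).differentiable (by simp) p)
      (hv.differentiable (by simp) p),
    dz_mul k u (dzbar h v) p (hu.differentiable (by simp) p)
      ((contDiff_dzbar h v hv).differentiable (by simp) p)]
  ring

/-- second mixed derivative of a finite sum -/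
lemma dz_dzbar_sum {n : ℕ} {ι : Type*} (s : Finset ι) (k h : Fin n)
    (f : ι → (Fin n → ℂ) → ℂ) (hf : ∀ a, ContDiff ℝ (⊤ : ℕ∞) (f a)) (p : Fin n → ℂ) :
    dz k (dzbar h (fun q => ∑ a ∈ s, f a q)) p = ∑ a ∈ s, dz k (dzbar h (f a)) p := by
  have e1 : dzbar h (fun q => ∑ a ∈ s, f a q) = fun q => ∑ a ∈ s, dzbar h (f a) q :=
    funext fun q => dzbar_sum s h f q (fun a _ => (hf a).differentiable (by simp) q)
  rw [e1]
  exact dz_sum s k (fun a => dzbar h (f a)) p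
    (fun a _ => (contDiff_dzbar h (f a) (hf a)).differentiable (by simp) p)

theorem stmt4 {n : ℕ} (g ginv : (Fin n → ℂ) → Matrix (Fin n) (Fin n) ℂ) (lam : ℝ)
    (hsmooth : ∀ i j, ContDiff ℝ (⊤ : ℕ∞) (fun p => g p i j))
    (hsmoothinv : ∀ i j, ContDiff ℝ (⊤ : ℕ∞) (fun p => ginv p i j))
    (hinv : ∀ p, g p * ginv p = 1)
    (hnormal0 : g 0 = 1)
    (hnormal1 : ∀ k i j, dz k (fun p => g p i j) 0 = 0 ∧ dzbar k (fun p => g p i j) 0 = 0)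
    (heinstein : ∀ᶠ p in nhds (0 : Fin n → ℂ), ∀ i j, Ric g ginv i j p = (lam : ℂ) * g p i j)
    (φ : (Fin n → ℂ) → ℂ) (hφ : ContDiff ℝ (⊤ : ℕ∞) φ) :
    DeltaK ginv (DeltaK ginv φ) 0 = Deltac (Deltac φ) 0 + (lam : ℂ) * Deltac φ 0 := by
  classical
  have dgd : ∀ i j, Differentiable ℝ (fun p => g p i j) := fun i j =>
    (hsmooth i j).differentiable (by simp)
  have dgi : ∀ i j, Differentiable ℝ (fun p => ginv p i j) := fun i j =>
    (hsmoothinv i j).differentiable (by simp)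
  have hn1 : ∀ k i j, dz k (fun p => g p i j) 0 = 0 := fun k i j => (hnormal1 k i j).1
  have hn2 : ∀ k i j, dzbar k (fun p => g p i j) 0 = 0 := fun k i j => (hnormal1 k i j).2
  have hA : ginv 0 = 1 := by have h := hinv 0; rwa [hnormal0, one_mul] at h
  have hconst : ∀ i j, (fun p => ∑ a, g p i a * ginv p a j)
      = (fun _ => if i = j then (1:ℂ) else 0) := by
    intro i j; funext p
    have h := congrArg (fun M => M i j) (hinv p)
    simpa [Matrix.mul_apply, Matrix.one_apply] using h
  -- first derivatives of ginv vanish at 0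
  have hB1 : ∀ k i j, dz k (fun p => ginv p i j) 0 = 0 := by
    intro k i j
    have h0 : dz k (fun p => ∑ a, g p i a * ginv p a j) 0 = 0 := by
      rw [hconst i j]; exact dz_const k _ 0
    have h1 : dz k (fun p => ∑ a, g p i a * ginv p a j) 0
        = ∑ a, dz k (fun p => g p i a * ginv p a j) 0 :=
      dz_sum Finset.univ k (fun a => fun p => g p i a * ginv p a j) 0
        (fun a _ => (dgd i a 0).mul (dgi a j 0))
    have h2 : ∀ a, dz k (fun p => g p i a * ginv p a j) 0
        = dz k (fun p => g p i a) 0 * ginv 0 a j + g 0 i a * dz k (fun p => ginv p a j) 0 :=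
      fun a => dz_mul k _ _ 0 (dgd i a 0) (dgi a j 0)
    rw [h1] at h0
    simp only [h2, hn1, zero_mul, zero_add, hnormal0, Matrix.one_apply, ite_mul, one_mul] at h0
    simpa using h0
  have hB2 : ∀ k i j, dzbar k (fun p => ginv p i j) 0 = 0 := by
    intro k i j
    have h0 : dzbar k (fun p => ∑ a, g p i a * ginv p a j) 0 = 0 := by
      rw [hconst i j]; exact dzbar_const k _ 0
    have h1 : dzbar k (fun p => ∑ a, g p i a * ginv p a j) 0
        = ∑ a, dzbar k (fun p => g p i a * ginv p a j) 0 :=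
      dzbar_sum Finset.univ k (fun a => fun p => g p i a * ginv p a j) 0
        (fun a _ => (dgd i a 0).mul (dgi a j 0))
    have h2 : ∀ a, dzbar k (fun p => g p i a * ginv p a j) 0
        = dzbar k (fun p => g p i a) 0 * ginv 0 a j + g 0 i a * dzbar k (fun p => ginv p a j) 0 :=
      fun a => dzbar_mul k _ _ 0 (dgd i a 0) (dgi a j 0)
    rw [h1] at h0
    simp only [h2, hn2, zero_mul, zero_add, hnormal0, Matrix.one_apply, ite_mul, one_mul] at h0
    simpa using h0
  -- second mixed derivatives of ginv in terms of g
  have hC : ∀ k h i j, dz k (dzbar h (fun p => ginv p i j)) 0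
      = - dz k (dzbar h (fun p => g p i j)) 0 := by
    intro k h i j
    have h0 : dz k (dzbar h (fun p => ∑ a, g p i a * ginv p a j)) 0 = 0 := by
      rw [hconst i j]
      have e : dzbar h (fun _ : Fin n → ℂ => if i = j then (1:ℂ) else 0) = fun _ => 0 :=
        funext fun q => dzbar_const h _ q
      rw [e]
      exact dz_const k 0 0
    have h1 : dz k (dzbar h (fun p => ∑ a, g p i a * ginv p a j)) 0
        = ∑ a, dz k (dzbar h (fun p => g p i a * ginv p a j)) 0 :=
      dz_dzbar_sum Finset.univ k h (fun a => fun p => g p i a * ginv p a j)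
        (fun a => (hsmooth i a).mul (hsmoothinv a j)) 0
    have h2 : ∀ a, dz k (dzbar h (fun p => g p i a * ginv p a j)) 0
        = dz k (dzbar h (fun p => g p i a)) 0 * ginv 0 a j
          + dzbar h (fun p => g p i a) 0 * dz k (fun p => ginv p a j) 0
          + dz k (fun p => g p i a) 0 * dzbar h (fun p => ginv p a j) 0
          + g 0 i a * dz k (dzbar h (fun p => ginv p a j)) 0 :=
      fun a => dz_dzbar_mul k h _ _ (hsmooth i a) (hsmoothinv a j) 0
    rw [h1] at h0
    simp only [h2, hn1, hn2, zero_mul, mul_zero, add_zero, zero_add, hA, hnormal0,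
      Matrix.one_apply, mul_ite, ite_mul, mul_one, one_mul, mul_zero,
      Finset.sum_add_distrib, Finset.sum_ite_eq, Finset.sum_ite_eq',
      Finset.mem_univ, if_true] at h0
    linear_combination h0
  -- Einstein condition at 0
  have hD : ∀ i j, (∑ k, dz k (dzbar k (fun p => ginv p i j)) 0)
      = (if i = j then (lam:ℂ) else 0) := by
    intro i j
    have h0 := heinstein.self_of_nhds i j
    simp only [Ric, hA, hnormal0, Matrix.one_apply, hn1, zero_mul, mul_zero,
      Finset.sum_const_zero, add_zero, mul_ite, ite_mul, one_mul, mul_one,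
      Finset.sum_ite_eq, Finset.sum_ite_eq', Finset.mem_univ, if_true] at h0
    calc ∑ k, dz k (dzbar k (fun p => ginv p i j)) 0
        = ∑ k, -(dz k (dzbar k (fun p => g p i j)) 0) :=
          Finset.sum_congr rfl fun k _ => hC k k i j
      _ = (if i = j then (lam:ℂ) else 0) := h0
  -- smoothness of second derivatives of φ
  have hHsm : ∀ a b, ContDiff ℝ (⊤ : ℕ∞) (dz b (dzbar a φ)) := fun a b =>
    contDiff_dz b _ (contDiff_dzbar a φ hφ)
  -- reduce outer DeltaK at 0
  have hL : DeltaK ginv (DeltaK ginv φ) 0 = ∑ i, dz i (dzbar i (DeltaK ginv φ)) 0 := by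
    show ∑ i, ∑ j, ginv 0 i j * dz j (dzbar i (DeltaK ginv φ)) 0 = _
    simp [hA, Matrix.one_apply]
  have hstep : ∀ i, dz i (dzbar i (DeltaK ginv φ)) 0 =
      ∑ a, ∑ b, (dz i (dzbar i (fun p => ginv p a b)) 0 * dz b (dzbar a φ) 0
        + (if a = b then dz i (dzbar i (dz b (dzbar a φ))) 0 else 0)) := by
    intro i
    have h1 : dz i (dzbar i (DeltaK ginv φ)) 0
        = ∑ a, dz i (dzbar i (fun p => ∑ b, ginv p a b * dz b (dzbar a φ) p)) 0 :=
      dz_dzbar_sum Finset.univ i i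
        (fun a => fun p => ∑ b, ginv p a b * dz b (dzbar a φ) p)
        (fun a => ContDiff.sum fun b _ => (hsmoothinv a b).mul (hHsm a b)) 0
    have h2 : ∀ a, dz i (dzbar i (fun p => ∑ b, ginv p a b * dz b (dzbar a φ) p)) 0
        = ∑ b, dz i (dzbar i (fun p => ginv p a b * dz b (dzbar a φ) p)) 0 :=
      fun a => dz_dzbar_sum Finset.univ i i
        (fun b => fun p => ginv p a b * dz b (dzbar a φ) p)
        (fun b => (hsmoothinv a b).mul (hHsm a b)) 0
    have h3 : ∀ a b, dz i (dzbar i (fun p => ginv p a b * dz b (dzbar a φ) p)) 0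
        = dz i (dzbar i (fun p => ginv p a b)) 0 * dz b (dzbar a φ) 0
          + dzbar i (fun p => ginv p a b) 0 * dz i (dz b (dzbar a φ)) 0
          + dz i (fun p => ginv p a b) 0 * dzbar i (dz b (dzbar a φ)) 0
          + ginv 0 a b * dz i (dzbar i (dz b (dzbar a φ))) 0 :=
      fun a b => dz_dzbar_mul i i _ _ (hsmoothinv a b) (hHsm a b) 0
    rw [h1]
    refine Finset.sum_congr rfl fun a _ => ?_
    rw [h2 a]
    refine Finset.sum_congr rfl fun b _ => ?_
    rw [h3 a b, hB1, hB2, hA, Matrix.one_apply]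
    simp [ite_mul]
  have hR : ∀ i, dz i (dzbar i (Deltac φ)) 0 = ∑ a, dz i (dzbar i (dz a (dzbar a φ))) 0 :=
    fun i => dz_dzbar_sum Finset.univ i i (fun a => dz a (dzbar a φ)) (fun a => hHsm a a) 0
  rw [hL]
  calc ∑ i, dz i (dzbar i (DeltaK ginv φ)) 0
      = ∑ i, ∑ a, ∑ b, (dz i (dzbar i (fun p => ginv p a b)) 0 * dz b (dzbar a φ) 0
          + (if a = b then dz i (dzbar i (dz b (dzbar a φ))) 0 else 0)) :=
        Finset.sum_congr rfl fun i _ => hstep i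
    _ = (∑ i, ∑ a, ∑ b, dz i (dzbar i (fun p => ginv p a b)) 0 * dz b (dzbar a φ) 0)
          + (∑ i, ∑ a, ∑ b, if a = b then dz i (dzbar i (dz b (dzbar a φ))) 0 else 0) := by
        simp [Finset.sum_add_distrib]
    _ = Deltac (Deltac φ) 0 + (lam : ℂ) * Deltac φ 0 := by
        have part1 : (∑ i, ∑ a, ∑ b,
            dz i (dzbar i (fun p => ginv p a b)) 0 * dz b (dzbar a φ) 0)
            = (lam : ℂ) * Deltac φ 0 := by
          rw [Finset.sum_comm]
          have e : ∀ a : Fin n, (∑ i, ∑ b,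
              dz i (dzbar i (fun p => ginv p a b)) 0 * dz b (dzbar a φ) 0)
              = ∑ b, (∑ i, dz i (dzbar i (fun p => ginv p a b)) 0) * dz b (dzbar a φ) 0 := by
            intro a
            rw [Finset.sum_comm]
            exact Finset.sum_congr rfl fun b _ => (Finset.sum_mul _ _ _).symm
          simp only [e, hD]
          show _ = (lam : ℂ) * ∑ a, dz a (dzbar a φ) 0
          simp [ite_mul, Finset.mul_sum]
        have part2 : (∑ i, ∑ a, ∑ b,
            if a = b then dz i (dzbar i (dz b (dzbar a φ))) 0 else 0)
            = Deltac (Deltac φ) 0 := by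
          simp only [Finset.sum_ite_eq, Finset.mem_univ, if_true]
          show _ = ∑ i, dz i (dzbar i (Deltac φ)) 0
          exact Finset.sum_congr rfl fun i _ => (hR i).symm
        rw [part1, part2, add_comm]
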